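/- (Sum-rank Hartmann–Tzeng bound) Let C ⊆ F^n be a nonzero cyclic-skew-cyclic code and let b, δ, r, t_1, t_2 be integers with gcd(n, t_1) = 1 and gcd(n, t_2) < δ. Let a ∈ K be a primitive ℓ-th root of unity and β a normal element of L/K. If for all 0 ≤ i ≤ δ−2 and 0 ≤ s ≤ r the pair (a^{b+i t_1+s t_2}, σ^{i t_1+s t_2}(β)) lies in the defining set T_C, then d_SR(C) ≥ δ + r. -/

import Mathlib

/-!
Put `x_{h,k} = c^{(h)}_k a^{bh} ∈ L` and `γ_k = σ^k(β)`, a `K`-basis of `L`. The pair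
`(a^{b+u}, σ^u(β)) ∈ T_C` says that the twisted sum `S(u) = Σ_{h,k} x_{h,k} (a^h)^u σ^u(γ_k)`
vanishes, and the sum-rank weight of `x` over `K` is at most `wt_SR(c)`, so it suffices to show
that `x = 0` once its weight is `< δ + r`.

Replacing `x_{h,k}` by `σ^t(x_{h,k}) - ν (a^h)^t x_{h,k}` and `γ` by `σ^t ∘ γ` turns `S(u)` into
`σ^t(S(u)) - ν S(u + t)`, and `ν` can be chosen to kill a nonzero coordinate, which lowers the
weight. If instead the replacement vanishes, every block of `x` lies in one line over the fixed
field of `σ^t`, of degree `gcd(m, t)` over `K`, and taking norms shows that the roots `a^h` of the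
nonzero blocks agree up to `gcd(ℓ, t)`-th roots of unity; so the weight of `x` is at most
`gcd(n, t)`. Eliminating along `t₂` uses up the `r + 1` values of `s` and leaves weight
`≤ gcd(n, t₂) < δ`; eliminating along `t₁`, where `gcd(n, t₁) = 1`, leaves weight `≤ 1`, where
`S(0) = 0` and the independence of `γ` force `x = 0`.
-/

/-- The rank weight of a vector over `F` with respect to the extension `F/E`. -/
noncomputable def rankWt (E : Type*) {F : Type*} [Field E] [Field F] [Algebra E F]
    {N : ℕ} (v : Fin N → F) : ℕ :=
  Module.finrank E (Submodule.span E (Set.range v) : Submodule E F)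

/-- The sum-rank weight w.r.t. the partition `(m,…,m)` and the extension `F/E`. -/
noncomputable def srWt (E : Type*) {F : Type*} [Field E] [Field F] [Algebra E F]
    {ℓ m : ℕ} (c : Fin ℓ → Fin m → F) : ℕ :=
  ∑ i, rankWt E (c i)

/-- `(a, β) ∈ K × L*` lies in the defining set `T_C` of the cyclic-skew-cyclic
code `C ⊆ F^{ℓm}`: every codeword `c = (c^{(0)}|…|c^{(ℓ-1)})` of `C` satisfies
`Σ_h Σ_t c^{(h)}_t σ^t(β) a^h = 0` in `L`. -/
def inDefiningSet {F K L : Type*} [Field F] [Field K] [Field L]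
    [Algebra F L] [Algebra K L] (σ : L ≃ₐ[K] L) {ℓ m : ℕ}
    (C : Submodule F (Fin ℓ → Fin m → F)) (a : K) (β : L) : Prop :=
  ∀ c ∈ C, ∑ h : Fin ℓ, ∑ t : Fin m,
    algebraMap F L (c h t) * (σ ^ (t : ℕ)) β * (algebraMap K L a) ^ (h : ℕ) = 0

open Finset Module Submodule

section LinearAlgebra

variable {K V W ι : Type*} [Field K] [AddCommGroup V] [Module K V] [AddCommGroup W] [Module K W]
  [Finite ι]

theorem finrank_span_range_comp_le (f : V →ₗ[K] W) (v : ι → V) :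
    finrank K (span K (Set.range (f ∘ v))) ≤ finrank K (span K (Set.range v)) := by
  have := FiniteDimensional.span_of_finite K (Set.finite_range v)
  rw [Set.range_comp, ← Submodule.map_span]
  exact Submodule.finrank_map_le f _

theorem finrank_span_range_comp_lt (f : V →ₗ[K] W) (v : ι → V) {i : ι} (hvi : v i ≠ 0)
    (hfi : f (v i) = 0) :
    finrank K (span K (Set.range (f ∘ v))) < finrank K (span K (Set.range v)) := by
  have := FiniteDimensional.span_of_finite K (Set.finite_range v)
  have hker : 0 < finrank K (LinearMap.ker (f.domRestrict (span K (Set.range v)))) :=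
    finrank_pos_iff_exists_ne_zero.mpr
      ⟨⟨⟨v i, subset_span ⟨i, rfl⟩⟩, by simpa using hfi⟩, by simpa using hvi⟩
  have := LinearMap.finrank_range_add_finrank_ker (f.domRestrict (span K (Set.range v)))
  rw [LinearMap.range_domRestrict, Submodule.map_span, ← Set.range_comp] at this
  omega

end LinearAlgebra

theorem rankWt_eq_zero_iff {E F : Type*} [Field E] [Field F] [Algebra E F] {N : ℕ}
    {v : Fin N → F} : rankWt E v = 0 ↔ v = 0 := by
  have := FiniteDimensional.span_of_finite E (Set.finite_range v)
  rw [rankWt, Submodule.finrank_eq_zero, span_eq_bot]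
  simp [funext_iff]

theorem srWt_eq_zero_iff {E F : Type*} [Field E] [Field F] [Algebra E F] {ℓ N : ℕ}
    {x : Fin ℓ → Fin N → F} : srWt E x = 0 ↔ x = 0 := by
  simp [srWt, rankWt_eq_zero_iff, funext_iff]

theorem finrank_span_algebraMap_le (E F K L : Type*) [Field E] [Field F] [Field K] [Field L]
    [Algebra E F] [Algebra E K] [Algebra E L] [Algebra F L] [Algebra K L]
    [IsScalarTower E F L] [IsScalarTower E K L] {ι : Type*} [Finite ι] (v : ι → F) :
    finrank K (span K (Set.range (algebraMap F L ∘ v))) ≤ finrank E (span E (Set.range v)) := by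
  have := FiniteDimensional.span_of_finite E (Set.finite_range v)
  have hmap : span E (Set.range (algebraMap F L ∘ v))
      = (span E (Set.range v)).map (IsScalarTower.toAlgHom E F L).toLinearMap := by
    rw [Submodule.map_span, ← Set.range_comp]; rfl
  have := FiniteDimensional.span_of_finite E (Set.finite_range (algebraMap F L ∘ v))
  obtain ⟨w, -, hw, -⟩ := exists_fun_fin_finrank_span_eq E (Set.range (algebraMap F L ∘ v))
  have hK : span K (Set.range w) = span K (Set.range (algebraMap F L ∘ v)) := by
    rw [← span_span_of_tower E, hw, span_span_of_tower]
  calc finrank K (span K (Set.range (algebraMap F L ∘ v)))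
      = finrank K (span K (Set.range w)) := by rw [hK]
    _ ≤ finrank E (span E (Set.range (algebraMap F L ∘ v))) :=
        (finrank_range_le_card w).trans_eq (Fintype.card_fin _)
    _ ≤ finrank E (span E (Set.range v)) := hmap ▸ Submodule.finrank_map_le _ _

theorem srWt_algebraMap_mul_le (E F K L : Type*) [Field E] [Field F] [Field K] [Field L]
    [Algebra E F] [Algebra E K] [Algebra E L] [Algebra F L] [Algebra K L]
    [IsScalarTower E F L] [IsScalarTower E K L] {ℓ N : ℕ} (c : Fin ℓ → Fin N → F)
    (z : Fin ℓ → L) :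
    srWt K (fun h k => algebraMap F L (c h k) * z h) ≤ srWt E c :=
  Finset.sum_le_sum fun h _ =>
    (finrank_span_range_comp_le (LinearMap.mulRight K (z h)) (algebraMap F L ∘ c h)).trans
      (finrank_span_algebraMap_le E F K L (c h))

theorem pow_gcd_natAbs_eq_one {G : Type*} [DivisionMonoid G] {η : G} {ℓ m : ℕ}
    (hℓm : ℓ.Coprime m) (hℓ : η ^ ℓ = 1) {t : ℤ} (ht : (η ^ t) ^ m = 1) :
    η ^ Nat.gcd ℓ t.natAbs = 1 := by
  have htm : η ^ (t.natAbs * m) = 1 := by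
    obtain ⟨n, rfl | rfl⟩ := Int.eq_nat_or_neg t <;> simpa [pow_mul, zpow_neg, inv_pow] using ht
  rw [← Nat.Coprime.gcd_mul_right_cancel_right t.natAbs hℓm.symm]
  exact pow_gcd_eq_one.mpr ⟨hℓ, htm⟩

theorem card_filter_pow_pow_eq_le {R : Type*} [CommRing R] [IsDomain R] [DecidableEq R] {ω : R}
    {ℓ g : ℕ} (hω : IsPrimitiveRoot ω ℓ) (hg : 0 < g) (a : R) :
    #{h : Fin ℓ | (ω ^ (h : ℕ)) ^ g = a} ≤ g := by
  calc #{h : Fin ℓ | (ω ^ (h : ℕ)) ^ g = a}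
      ≤ (Polynomial.nthRootsFinset g a).card :=
        Finset.card_le_card_of_injOn (fun h => ω ^ (h : ℕ))
          (fun h hh => (Polynomial.mem_nthRootsFinset hg a).mpr (Finset.mem_filter.mp hh).2)
          (fun h₁ _ h₂ _ e => Fin.ext (hω.pow_inj h₁.2 h₂.2 e))
    _ ≤ g := by
      rw [Polynomial.nthRootsFinset_def]
      exact (Multiset.toFinset_card_le _).trans (Polynomial.card_nthRoots g a)

section Galois

variable {K L : Type*} [Field K] [Field L] [Algebra K L] [FiniteDimensional K L]

theorem pow_finrank_eq_one_of_apply_eq_algebraMap_mul (τ : L ≃ₐ[K] L) {ξ : L} (hξ : ξ ≠ 0)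
    {c : K} (h : τ ξ = algebraMap K L c * ξ) : c ^ finrank K L = 1 := by
  have hN := congrArg (Algebra.norm K) h
  rw [Algebra.norm_eq_of_algEquiv, map_mul, Algebra.norm_algebraMap] at hN
  exact (mul_eq_right₀ (Algebra.norm_ne_zero_iff.mpr hξ)).mp hN.symm

theorem rankWt_le_finrank_fixedField (τ : L ≃ₐ[K] L) {N : ℕ} {v : Fin N → L} {c : L}
    (hv : ∀ k, τ (v k) = c * v k) :
    rankWt K v ≤ finrank K (IntermediateField.fixedField (Subgroup.zpowers τ)) := by
  by_cases hv0 : v = 0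
  · exact (rankWt_eq_zero_iff.mpr hv0).trans_le (Nat.zero_le _)
  obtain ⟨k₁, hk₁⟩ : ∃ k, v k ≠ 0 := by simpa [funext_iff] using hv0
  have hc : c ≠ 0 := by
    rintro rfl
    exact hk₁ (by simpa using hv k₁)
  have hle : span K (Set.range v) ≤ (IntermediateField.fixedField
      (Subgroup.zpowers τ)).toSubalgebra.toSubmodule.map (LinearMap.mulLeft K (v k₁)) := by
    rw [span_le]
    rintro _ ⟨k, rfl⟩
    have hfix : (v k₁)⁻¹ * v k ∈ MulAction.fixedBy L τ := by
      rw [MulAction.mem_fixedBy, AlgEquiv.smul_def, map_mul, map_inv₀, hv, hv]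
      field_simp
    refine ⟨(v k₁)⁻¹ * v k, (IntermediateField.mem_fixedField_iff _ _).mpr ?_,
      mul_inv_cancel_left₀ hk₁ _⟩
    rintro _ ⟨j, rfl⟩
    exact MulAction.mem_fixedBy_zpow hfix j
  exact (Submodule.finrank_mono hle).trans (Submodule.finrank_map_le _ _)

theorem finrank_fixedField_zpowers_zpow [IsGalois K L] {σ : L ≃ₐ[K] L}
    (hσ : ∀ τ, τ ∈ Subgroup.zpowers σ) (t : ℤ) :
    finrank K (IntermediateField.fixedField (Subgroup.zpowers (σ ^ t))) =
      Nat.gcd (finrank K L) t.natAbs := by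
  have hord : orderOf σ = finrank K L :=
    (orderOf_eq_card_of_forall_mem_zpowers hσ).trans (IsGalois.card_aut_eq_finrank K L)
  have hzp : Subgroup.zpowers (σ ^ t) = Subgroup.zpowers (σ ^ t.natAbs) := by
    obtain ⟨n, rfl | rfl⟩ := Int.eq_nat_or_neg t <;> simp [zpow_neg, Subgroup.zpowers_inv]
  have htower := Module.finrank_mul_finrank K
    (IntermediateField.fixedField (Subgroup.zpowers (σ ^ t))) L
  have hcard : Nat.card (Subgroup.zpowers (σ ^ t)) =
      finrank K L / Nat.gcd (finrank K L) t.natAbs := by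
    rw [hzp, Nat.card_zpowers, orderOf_pow, hord]
  rw [IntermediateField.finrank_fixedField_eq_card, hcard] at htower
  have hg : Nat.gcd (finrank K L) t.natAbs ∣ finrank K L := Nat.gcd_dvd_left _ _
  refine Nat.eq_of_mul_eq_mul_right (Nat.div_pos (Nat.le_of_dvd finrank_pos hg)
    (Nat.gcd_pos_of_pos_left _ finrank_pos)) ?_
  rw [htower, Nat.mul_div_cancel' hg]

end Galois

section TwistedSum

variable {K L : Type*} [Field K] [Field L] [Algebra K L] {ℓ N : ℕ}

def twistedSum (σ : L ≃ₐ[K] L) (ω : K) (x : Fin ℓ → Fin N → L) (γ : Fin N → L) (u : ℤ) : L :=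
  ∑ h, ∑ k, x h k * algebraMap K L ((ω ^ (h : ℕ)) ^ u) * (σ ^ u) (γ k)

def eliminate (σ : L ≃ₐ[K] L) (ω : K) (t : ℤ) (ν : L) (x : Fin ℓ → Fin N → L) :
    Fin ℓ → Fin N → L :=
  fun h k => (σ ^ t) (x h k) - ν * algebraMap K L ((ω ^ (h : ℕ)) ^ t) * x h k

theorem twistedSum_eliminate {ω : K} (hω : ω ≠ 0) (σ : L ≃ₐ[K] L) (t : ℤ) (ν : L)
    (x : Fin ℓ → Fin N → L) (γ : Fin N → L) (u : ℤ) :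
    twistedSum σ ω (eliminate σ ω t ν x) (fun k => (σ ^ t) (γ k)) u =
      (σ ^ t) (twistedSum σ ω x γ u) - ν * twistedSum σ ω x γ (u + t) := by
  simp only [twistedSum, eliminate, map_sum, Finset.mul_sum, ← Finset.sum_sub_distrib]
  refine Finset.sum_congr rfl fun h _ => Finset.sum_congr rfl fun k _ => ?_
  rw [zpow_add₀ (pow_ne_zero _ hω), map_mul, map_mul, map_mul, AlgEquiv.commutes,
    ← AlgEquiv.mul_apply, ← AlgEquiv.mul_apply, ← zpow_add, ← zpow_add, add_comm t u]
  ring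

theorem exists_srWt_eliminate_lt [FiniteDimensional K L] (σ : L ≃ₐ[K] L) {ω : K} (hω : ω ≠ 0)
    (t : ℤ) {x : Fin ℓ → Fin N → L} (hx : x ≠ 0) :
    ∃ ν, srWt K (eliminate σ ω t ν x) < srWt K x := by
  obtain ⟨h₀, k₀, hx₀⟩ : ∃ h k, x h k ≠ 0 := by simpa [funext_iff] using hx
  let f : L → L →ₗ[K] L := fun ν => (σ ^ t).toLinearMap - LinearMap.mulLeft K ν
  set ν := (σ ^ t) (x h₀ k₀) / (algebraMap K L ((ω ^ (h₀ : ℕ)) ^ t) * x h₀ k₀)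
  refine ⟨ν, Finset.sum_lt_sum (fun h _ => finrank_span_range_comp_le
    (f (ν * algebraMap K L ((ω ^ (h : ℕ)) ^ t))) (x h)) ⟨h₀, Finset.mem_univ _, ?_⟩⟩
  refine finrank_span_range_comp_lt (f (ν * algebraMap K L ((ω ^ (h₀ : ℕ)) ^ t))) (x h₀) hx₀ ?_
  show (σ ^ t) (x h₀ k₀) - ν * algebraMap K L ((ω ^ (h₀ : ℕ)) ^ t) * x h₀ k₀ = 0
  rw [mul_assoc, div_mul_cancel₀ _ (mul_ne_zero ((map_ne_zero _).mpr
    (zpow_ne_zero _ (pow_ne_zero _ hω))) hx₀), sub_self]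

theorem apply_eq_of_eliminate_eq_zero {σ : L ≃ₐ[K] L} {ω : K} {t : ℤ} {ν : L}
    {x : Fin ℓ → Fin N → L} (hx : eliminate σ ω t ν x = 0) (h : Fin ℓ) (k : Fin N) :
    (σ ^ t) (x h k) = ν * algebraMap K L ((ω ^ (h : ℕ)) ^ t) * x h k :=
  sub_eq_zero.mp (congrFun₂ hx h k)

variable [FiniteDimensional K L] {σ : L ≃ₐ[K] L} {ω : K}

theorem pow_gcd_eq_of_eliminate_eq_zero (hω : IsPrimitiveRoot ω ℓ)
    (hℓ : ℓ.Coprime (finrank K L)) {t : ℤ} {ν : L} {x : Fin ℓ → Fin N → L}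
    (hx : eliminate σ ω t ν x = 0) {h₀ h : Fin ℓ} {k₀ k : Fin N} (hx₀ : x h₀ k₀ ≠ 0)
    (hxk : x h k ≠ 0) :
    (ω ^ (h : ℕ)) ^ Nat.gcd ℓ t.natAbs = (ω ^ (h₀ : ℕ)) ^ Nat.gcd ℓ t.natAbs := by
  have hω0 : ω ≠ 0 := hω.ne_zero h₀.pos.ne'
  have hν : ν ≠ 0 := by
    rintro rfl
    exact hx₀ (by simpa using apply_eq_of_eliminate_eq_zero hx h₀ k₀)
  have heig : (σ ^ t) (x h k / x h₀ k₀) =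
      algebraMap K L ((ω ^ (h : ℕ) / ω ^ (h₀ : ℕ)) ^ t) * (x h k / x h₀ k₀) := by
    rw [map_div₀, apply_eq_of_eliminate_eq_zero hx, apply_eq_of_eliminate_eq_zero hx, div_zpow,
      map_div₀]
    field_simp
  have hη : (ω ^ (h : ℕ) / ω ^ (h₀ : ℕ)) ^ ℓ = 1 := by
    rw [div_pow, ← pow_mul, ← pow_mul, mul_comm, pow_mul, hω.pow_eq_one, mul_comm, pow_mul,
      hω.pow_eq_one, one_pow, one_pow, div_one]
  have := pow_gcd_natAbs_eq_one hℓ hη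
    (pow_finrank_eq_one_of_apply_eq_algebraMap_mul _ (div_ne_zero hxk hx₀) heig)
  rwa [div_pow, div_eq_one_iff_eq (pow_ne_zero _ (pow_ne_zero _ hω0))] at this

theorem srWt_le_of_eliminate_eq_zero [IsGalois K L] (hσ : ∀ τ, τ ∈ Subgroup.zpowers σ)
    (hω : IsPrimitiveRoot ω ℓ) (hℓ : ℓ.Coprime (finrank K L)) {t : ℤ} {ν : L}
    {x : Fin ℓ → Fin N → L} (hx : eliminate σ ω t ν x = 0) :
    srWt K x ≤ Int.gcd (ℓ * finrank K L) t := by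
  classical
  by_cases hx0 : x = 0
  · simp [srWt_eq_zero_iff.mpr hx0]
  obtain ⟨h₀, k₀, hx₀⟩ : ∃ h k, x h k ≠ 0 := by simpa [funext_iff] using hx0
  set g := Nat.gcd ℓ t.natAbs
  have hactive : ∀ h, rankWt K (x h) ≠ 0 → (ω ^ (h : ℕ)) ^ g = (ω ^ (h₀ : ℕ)) ^ g := by
    intro h hh
    obtain ⟨k, hk⟩ : ∃ k, x h k ≠ 0 := by simpa [funext_iff] using mt rankWt_eq_zero_iff.mpr hh
    exact pow_gcd_eq_of_eliminate_eq_zero hω hℓ hx hx₀ hk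
  have hblock : ∀ h, rankWt K (x h) ≤ Nat.gcd (finrank K L) t.natAbs := fun h =>
    finrank_fixedField_zpowers_zpow hσ t ▸
      rankWt_le_finrank_fixedField (σ ^ t) (apply_eq_of_eliminate_eq_zero hx h)
  calc srWt K x = ∑ h ∈ {h : Fin ℓ | (ω ^ (h : ℕ)) ^ g = (ω ^ (h₀ : ℕ)) ^ g}, rankWt K (x h) :=
        (Finset.sum_filter_of_ne fun h _ => hactive h).symm
    _ ≤ #{h : Fin ℓ | (ω ^ (h : ℕ)) ^ g = (ω ^ (h₀ : ℕ)) ^ g} • Nat.gcd (finrank K L) t.natAbs :=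
        Finset.sum_le_card_nsmul _ _ _ fun h _ => hblock h
    _ ≤ g * Nat.gcd (finrank K L) t.natAbs :=
        Nat.mul_le_mul_right _ (card_filter_pow_pow_eq_le hω (Nat.gcd_pos_of_pos_left _ h₀.pos) _)
    _ = Int.gcd (ℓ * finrank K L) t := by
        rw [Int.gcd, Int.natAbs_mul, Int.natAbs_natCast, Int.natAbs_natCast,
          Nat.gcd_comm (ℓ * _), Nat.Coprime.gcd_mul _ hℓ, Nat.gcd_comm t.natAbs,
          Nat.gcd_comm t.natAbs]

end TwistedSum

section Bounds

variable {K L : Type*} [Field K] [Field L] [Algebra K L] {ℓ N : ℕ}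

theorem eq_zero_and_smul_eq_of_srWt_le_one {x : Fin ℓ → Fin N → L} (hx : srWt K x ≤ 1)
    {h₀ : Fin ℓ} {k₀ : Fin N} (hx₀ : x h₀ k₀ ≠ 0) :
    (∀ h, h ≠ h₀ → x h = 0) ∧ ∀ k, ∃ κ : K, κ • x h₀ k₀ = x h₀ k := by
  classical
  have := FiniteDimensional.span_of_finite K (Set.finite_range (x h₀))
  have hline : span K {x h₀ k₀} ≤ span K (Set.range (x h₀)) :=
    span_le.mpr (Set.singleton_subset_iff.mpr (subset_span ⟨k₀, rfl⟩))
  have hpos : 1 ≤ rankWt K (x h₀) :=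
    (finrank_span_singleton hx₀).symm.le.trans (Submodule.finrank_mono hline)
  have hsplit := Finset.add_sum_erase Finset.univ (fun h => rankWt K (x h)) (Finset.mem_univ h₀)
  unfold srWt at hx
  refine ⟨fun h hh => rankWt_eq_zero_iff.mp <| Nat.eq_zero_of_le_zero <|
    (Finset.single_le_sum (f := fun h => rankWt K (x h)) (fun _ _ => Nat.zero_le _)
      (Finset.mem_erase.mpr ⟨hh, Finset.mem_univ h⟩)).trans (by omega), fun k => ?_⟩
  have hspan : span K {x h₀ k₀} = span K (Set.range (x h₀)) := by
    refine Submodule.eq_of_le_of_finrank_le hline ?_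
    rw [finrank_span_singleton hx₀]
    change rankWt K (x h₀) ≤ 1
    omega
  exact mem_span_singleton.mp (hspan ▸ subset_span ⟨k, rfl⟩)

theorem eq_zero_of_srWt_le_one {x : Fin ℓ → Fin N → L} {γ : Fin N → L}
    (hγ : LinearIndependent K γ) (hx : srWt K x ≤ 1) (hsum : ∑ h, ∑ k, x h k * γ k = 0) :
    x = 0 := by
  by_contra hx0
  obtain ⟨h₀, k₀, hx₀⟩ : ∃ h k, x h k ≠ 0 := by simpa [funext_iff] using hx0
  obtain ⟨hothers, hκ⟩ := eq_zero_and_smul_eq_of_srWt_le_one hx hx₀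
  choose κ hκ using hκ
  have hκγ : ∑ k, κ k • γ k = 0 := by
    rw [Finset.sum_eq_single h₀ (fun h _ hh => by simp [hothers h hh]) (by simp)] at hsum
    refine (mul_eq_zero.mp ?_).resolve_left hx₀
    rw [Finset.mul_sum, ← hsum]
    refine Finset.sum_congr rfl fun k _ => ?_
    rw [← hκ k, Algebra.smul_def, Algebra.smul_def]
    ring
  have hκ₀ := hκ k₀
  rw [Fintype.linearIndependent_iff.mp hγ κ hκγ k₀, zero_smul] at hκ₀
  exact hx₀ hκ₀.symm

variable [FiniteDimensional K L] [IsGalois K L] [NeZero ℓ] {σ : L ≃ₐ[K] L} {ω : K}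

theorem eq_zero_of_twistedSum_bch (hσ : ∀ τ, τ ∈ Subgroup.zpowers σ)
    (hω : IsPrimitiveRoot ω ℓ) (hℓ : ℓ.Coprime (finrank K L)) {t : ℤ}
    (ht : Int.gcd (ℓ * finrank K L) t = 1) (d : ℕ) :
    ∀ {x : Fin ℓ → Fin N → L} {γ : Fin N → L}, LinearIndependent K γ → srWt K x ≤ d →
      (∀ n : ℕ, n < d → twistedSum σ ω x γ (n * t) = 0) → x = 0 := by
  have hω0 : ω ≠ 0 := hω.ne_zero (NeZero.ne ℓ)
  induction d with
  | zero => exact fun _ hx _ => srWt_eq_zero_iff.mp (Nat.le_zero.mp hx)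
  | succ d ih =>
    intro x γ hγ hx hS
    by_contra hx0
    obtain ⟨ν, hν⟩ := exists_srWt_eliminate_lt σ hω0 t hx0
    have hγ' : LinearIndependent K fun k => (σ ^ t) (γ k) :=
      hγ.map' (σ ^ t).toLinearEquiv.toLinearMap (σ ^ t).toLinearEquiv.ker
    have helim : eliminate σ ω t ν x = 0 := ih hγ' (by omega) fun n hn => by
      rw [twistedSum_eliminate hω0, hS n (by omega),
        show (n : ℤ) * t + t = ((n + 1 : ℕ) : ℤ) * t by push_cast; ring, hS (n + 1) (by omega),
        map_zero, mul_zero, sub_zero]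
    have h1 := srWt_le_of_eliminate_eq_zero hσ hω hℓ helim
    rw [ht] at h1
    exact hx0 (eq_zero_of_srWt_le_one hγ h1 (by simpa [twistedSum] using hS 0 (by omega)))

theorem eq_zero_of_twistedSum_hartmannTzeng (hσ : ∀ τ, τ ∈ Subgroup.zpowers σ)
    (hω : IsPrimitiveRoot ω ℓ) (hℓ : ℓ.Coprime (finrank K L)) {t₁ t₂ : ℤ} {δ : ℕ}
    (ht₁ : Int.gcd (ℓ * finrank K L) t₁ = 1) (ht₂ : Int.gcd (ℓ * finrank K L) t₂ < δ) (r : ℕ) :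
    ∀ {x : Fin ℓ → Fin N → L} {γ : Fin N → L}, LinearIndependent K γ → srWt K x < δ + r →
      (∀ i s : ℕ, i + 2 ≤ δ → s ≤ r → twistedSum σ ω x γ (i * t₁ + s * t₂) = 0) → x = 0 := by
  have hω0 : ω ≠ 0 := hω.ne_zero (NeZero.ne ℓ)
  have base : ∀ {x : Fin ℓ → Fin N → L} {γ : Fin N → L}, LinearIndependent K γ →
      srWt K x < δ →
      (∀ i s : ℕ, i + 2 ≤ δ → s ≤ 0 → twistedSum σ ω x γ (i * t₁ + s * t₂) = 0) → x = 0 :=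
    fun hγ hx hS => eq_zero_of_twistedSum_bch hσ hω hℓ ht₁ (δ - 1) hγ (by omega)
      fun n hn => by simpa using hS n 0 (by omega) le_rfl
  induction r with
  | zero => exact base
  | succ r ih =>
    intro x γ hγ hx hS
    by_contra hx0
    obtain ⟨ν, hν⟩ := exists_srWt_eliminate_lt σ hω0 t₂ hx0
    have hγ' : LinearIndependent K fun k => (σ ^ t₂) (γ k) :=
      hγ.map' (σ ^ t₂).toLinearEquiv.toLinearMap (σ ^ t₂).toLinearEquiv.ker
    have helim : eliminate σ ω t₂ ν x = 0 := ih hγ' (by omega) fun i s hi hs => by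
      rw [twistedSum_eliminate hω0, hS i s hi (by omega),
        show (i : ℤ) * t₁ + s * t₂ + t₂ = i * t₁ + ((s + 1 : ℕ) : ℤ) * t₂ by push_cast; ring,
        hS i (s + 1) hi (by omega), map_zero, mul_zero, sub_zero]
    exact hx0 (base hγ ((srWt_le_of_eliminate_eq_zero hσ hω hℓ helim).trans_lt ht₂)
      fun i s hi hs => hS i s hi (by omega))

end Bounds

theorem twistedSum_eq_zero_of_inDefiningSet {K L F : Type*} [Field K] [Field L] [Field F]
    [Algebra K L] [Algebra F L] {σ : L ≃ₐ[K] L} {ℓ m : ℕ}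
    {C : Submodule F (Fin ℓ → Fin m → F)} {a : K} (ha : a ≠ 0) {β : L} {b u : ℤ}
    (hC : inDefiningSet σ C (a ^ (b + u)) ((σ ^ u) β)) {c : Fin ℓ → Fin m → F} (hc : c ∈ C) :
    twistedSum σ a (fun h k => algebraMap F L (c h k) * algebraMap K L ((a ^ (h : ℕ)) ^ b))
      (fun k => (σ ^ (k : ℕ)) β) u = 0 := by
  rw [← hC c hc]
  refine Finset.sum_congr rfl fun h _ => Finset.sum_congr rfl fun k _ => ?_
  have hcomm : (σ ^ u) ((σ ^ (k : ℕ)) β) = (σ ^ (k : ℕ)) ((σ ^ u) β) := by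
    rw [← zpow_natCast, ← AlgEquiv.mul_apply, ← AlgEquiv.mul_apply, ← zpow_add, ← zpow_add,
      add_comm]
  have hpow : (a ^ (b + u)) ^ (h : ℕ) = (a ^ (h : ℕ)) ^ b * (a ^ (h : ℕ)) ^ u := by
    rw [← zpow_add₀ (pow_ne_zero _ ha), ← zpow_natCast, ← zpow_natCast, ← zpow_mul, ← zpow_mul,
      mul_comm]
  rw [hcomm, ← map_pow, hpow, map_mul]
  ring

theorem sumRank_HartmannTzeng_bound_general
    -- the tower of fields E ⊆ F, K ⊆ L = FK with F/E of degree m, K/E of degree h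
    (E F K L : Type*) [Field E] [Field F] [Field K] [Field L]
    [Algebra E F] [Algebra E K] [Algebra E L] [Algebra F L] [Algebra K L]
    [IsScalarTower E F L] [IsScalarTower E K L]
    (m ℓ : ℕ) [NeZero m] [NeZero ℓ]
    -- L/K cyclic Galois of degree m with generator σ
    [IsGalois K L] (hLK : Module.finrank K L = m)
    (σ : L ≃ₐ[K] L) (hσgen : ∀ τ : L ≃ₐ[K] L, τ ∈ Subgroup.zpowers σ)
    -- ℓ coprime with m and with the characteristic of K
    (hlm : Nat.Coprime ℓ m)
    -- a nonzero cyclic-skew-cyclic code C ⊆ F^n, n = ℓm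
    (C : Submodule F (Fin ℓ → Fin m → F))
    -- the integers b, δ, r, t₁, t₂ with gcd(n,t₁)=1 and gcd(n,t₂)<δ
    (b t₁ t₂ : ℤ) (δ r : ℕ)
    (hgcd1 : Int.gcd (ℓ * m : ℤ) t₁ = 1)
    (hgcd2 : Int.gcd (ℓ * m : ℤ) t₂ < δ)
    -- a primitive ℓ-th root of unity a ∈ K and a normal element β of L/K
    (a : K) (ha : IsPrimitiveRoot a ℓ) (β : L)
    (hβ : ∃ bb : Module.Basis (Fin m) K L, ∀ t : Fin m, bb t = (σ ^ (t : ℕ)) β)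
    -- the Hartmann–Tzeng condition on the defining set
    (hdef : ∀ (i : ℕ), (i : ℤ) ≤ (δ : ℤ) - 2 → ∀ (s : ℕ), s ≤ r →
      inDefiningSet σ C (a ^ (b + i * t₁ + s * t₂)) ((σ ^ (i * t₁ + s * t₂ : ℤ)) β)) :
    ∀ c ∈ C, c ≠ 0 → δ + r ≤ srWt E c := by
  intro c hc hc0
  have : FiniteDimensional K L := .of_finrank_pos (hLK ▸ NeZero.pos m)
  have ha0 : a ≠ 0 := ha.ne_zero (NeZero.ne ℓ)
  obtain ⟨bb, hbb⟩ := hβ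
  have hγ : LinearIndependent K fun k : Fin m => (σ ^ (k : ℕ)) β := by
    simpa only [← hbb] using bb.linearIndependent
  set x : Fin ℓ → Fin m → L :=
    fun h k => algebraMap F L (c h k) * algebraMap K L ((a ^ (h : ℕ)) ^ b)
  have hx0 : x ≠ 0 := fun hx => hc0 <| funext₂ fun h k => by
    simpa [x, ha0, zpow_ne_zero] using congrFun₂ hx h k
  by_contra! hlt
  refine hx0 (eq_zero_of_twistedSum_hartmannTzeng hσgen ha (hLK ▸ hlm) (hLK ▸ hgcd1)
    (hLK ▸ hgcd2) r hγ ((srWt_algebraMap_mul_le E F K L c _).trans_lt hlt) fun i s hi hs => ?_)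
  refine twistedSum_eq_zero_of_inDefiningSet ha0 ?_ hc
  simpa only [add_assoc] using hdef i (by omega) s hs

/-- **Sum-rank Hartmann–Tzeng bound.** If the defining set of a
nonzero cyclic-skew-cyclic code `C ⊆ F^n`, `n = ℓm`, contains all the pairs
`(a^{b+it₁+st₂}, σ^{it₁+st₂}(β))` for `0 ≤ i ≤ δ-2`, `0 ≤ s ≤ r`, where
`gcd(n,t₁) = 1` and `gcd(n,t₂) < δ`, then `d_SR(C) ≥ δ + r`. -/
theorem sumRank_HartmannTzeng_bound
    -- the tower of fields E ⊆ F, K ⊆ L = FK with F/E of degree m, K/E of degree h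
    (E F K L : Type*) [Field E] [Field F] [Field K] [Field L]
    [Algebra E F] [Algebra E K] [Algebra E L] [Algebra F L] [Algebra K L]
    [IsScalarTower E F L] [IsScalarTower E K L]
    (m h ℓ : ℕ) [NeZero m] [NeZero ℓ]
    (hFE : Module.finrank E F = m) (hKE : Module.finrank E K = h)
    (hcap : Set.range (algebraMap F L) ∩ Set.range (algebraMap K L)
      = Set.range (algebraMap E L))
    (hcomp : Algebra.adjoin K (Set.range (algebraMap F L)) = ⊤)
    -- L/K cyclic Galois of degree m with generator σ
    [IsGalois K L] (hLK : Module.finrank K L = m)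
    (σ : L ≃ₐ[K] L) (hσgen : ∀ τ : L ≃ₐ[K] L, τ ∈ Subgroup.zpowers σ)
    -- θ = σ|_F has order m and fixed field E
    (θ : F ≃+* F) (hθσ : ∀ x : F, σ (algebraMap F L x) = algebraMap F L (θ x))
    (hθord : orderOf θ = m)
    (hθfix : {x : F | θ x = x} = Set.range (algebraMap E F))
    -- ℓ coprime with m and with the characteristic of K
    (hlm : Nat.Coprime ℓ m) (hchar : (ℓ : K) ≠ 0)
    -- a nonzero cyclic-skew-cyclic code C ⊆ F^n, n = ℓm
    (C : Submodule F (Fin ℓ → Fin m → F)) (hC : C ≠ ⊥)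
    (hρ : ∀ c ∈ C, (fun i => c (i - 1)) ∈ C)
    (hφ : ∀ c ∈ C, (fun i j => θ (c i (j - 1))) ∈ C)
    -- the integers b, δ, r, t₁, t₂ with gcd(n,t₁)=1 and gcd(n,t₂)<δ
    (b t₁ t₂ : ℤ) (δ r : ℕ)
    (hgcd1 : Int.gcd (ℓ * m : ℤ) t₁ = 1)
    (hgcd2 : Int.gcd (ℓ * m : ℤ) t₂ < δ)
    -- a primitive ℓ-th root of unity a ∈ K and a normal element β of L/K
    (a : K) (ha : IsPrimitiveRoot a ℓ) (β : L)
    (hβ : ∃ bb : Module.Basis (Fin m) K L, ∀ t : Fin m, bb t = (σ ^ (t : ℕ)) β)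
    -- the Hartmann–Tzeng condition on the defining set
    (hdef : ∀ (i : ℕ), (i : ℤ) ≤ (δ : ℤ) - 2 → ∀ (s : ℕ), s ≤ r →
      inDefiningSet σ C (a ^ (b + i * t₁ + s * t₂)) ((σ ^ (i * t₁ + s * t₂ : ℤ)) β)) :
    ∀ c ∈ C, c ≠ 0 → δ + r ≤ srWt E c :=
  sumRank_HartmannTzeng_bound_general E F K L m ℓ hLK σ hσgen hlm C b t₁ t₂ δ r hgcd1 hgcd2 a ha β
    hβ hdef
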